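/- arXiv:2504.11217 — 2 statements merged into one kernel-verified Lean document; each statement's English description precedes it below -/
import Mathlib

section
/- If a₍₁₎ ≥ a₍₂₎ ≥ … ≥ a₍N₎ ≥ 0 is a nonincreasing rearrangement of nonnegative reals a₁,…,aN, then for any 0 < r ≤ p and any 0 ≤ n ≤ N−1, ∑_{k=n+1}^{N} a₍ₖ₎^p ≤ (∑_{i=1}^{N} a_i^r)^{p/r} · (n+1)^{1 − p/r}. -/
/-!
Put `b i = a i ^ r` and `q = p / r ≥ 1`, so that `a k ^ p = b k ^ q` and `S = ∑ b i`.
Since `b` is nonincreasing, the `n + 1` largest terms give `(n + 1) b_{(n+1)} ≤ S`, so every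
tail term satisfies `b_{(k)} ≤ S / (n + 1)` and hence `b_{(k)} ^ q ≤ b_{(k)} (S / (n + 1)) ^ (q - 1)`.
Summing over the tail gives `S (S / (n + 1)) ^ (q - 1) = S ^ q (n + 1) ^ (1 - q)`.
-/

open Real Finset

lemma Real.rpow_le_mul_rpow_sub_one {b c q : ℝ} (hb : 0 ≤ b) (hbc : b ≤ c) (hq : 1 ≤ q) :
    b ^ q ≤ b * c ^ (q - 1) := by
  calc b ^ q = b ^ (1 + (q - 1)) := by rw [add_sub_cancel]
    _ = b * b ^ (q - 1) := by rw [rpow_add' hb (by linarith), rpow_one]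
    _ ≤ b * c ^ (q - 1) := by gcongr

lemma Real.mul_div_rpow_sub_one {S x q : ℝ} (hS : 0 ≤ S) (hx : 0 < x) (hq : q ≠ 0) :
    S * (S / x) ^ (q - 1) = S ^ q * x ^ (1 - q) := by
  rw [div_rpow hS hx.le, ← neg_sub q 1, rpow_neg hx.le, mul_div_assoc', div_eq_mul_inv,
    ← rpow_one_add' hS (by simpa using hq), add_sub_cancel]

section Antitone

variable {ι : Type*} [Fintype ι] [Preorder ι] [LocallyFiniteOrderBot ι] {b : ι → ℝ}

lemma card_Iic_mul_le_sum_of_antitone (hb : ∀ i, 0 ≤ b i) (hanti : Antitone b) (m : ι) :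
    #(Iic m) * b m ≤ ∑ i, b i := by
  calc #(Iic m) * b m = ∑ _i ∈ Iic m, b m := by rw [sum_const, nsmul_eq_mul]
    _ ≤ ∑ i ∈ Iic m, b i := sum_le_sum fun i hi => hanti (mem_Iic.1 hi)
    _ ≤ ∑ i, b i := sum_le_sum_of_subset_of_nonneg (subset_univ _) fun i _ _ => hb i

lemma sum_Ici_rpow_le_of_antitone [LocallyFiniteOrderTop ι] (hb : ∀ i, 0 ≤ b i) (hanti : Antitone b) (m : ι) {q : ℝ}
    (hq : 1 ≤ q) :
    ∑ k ∈ Ici m, b k ^ q ≤ (∑ i, b i) ^ q * (#(Iic m) : ℝ) ^ (1 - q) := by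
  set S := ∑ i, b i
  have hcard : (0 : ℝ) < #(Iic m) := by
    exact_mod_cast card_pos.2 ⟨m, mem_Iic.2 le_rfl⟩
  have hbm : b m ≤ S / #(Iic m) := by
    rw [le_div_iff₀' hcard]
    exact card_Iic_mul_le_sum_of_antitone hb hanti m
  calc ∑ k ∈ Ici m, b k ^ q ≤ ∑ k ∈ Ici m, b k * (S / #(Iic m)) ^ (q - 1) :=
        sum_le_sum fun k hk =>
          rpow_le_mul_rpow_sub_one (hb k) ((hanti (mem_Ici.1 hk)).trans hbm) hq
    _ = (∑ k ∈ Ici m, b k) * (S / #(Iic m)) ^ (q - 1) := by rw [sum_mul]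
    _ ≤ S * (S / #(Iic m)) ^ (q - 1) := by
        gcongr
        · exact rpow_nonneg (div_nonneg (sum_nonneg fun i _ => hb i) hcard.le) _
        · exact sum_le_sum_of_subset_of_nonneg (subset_univ _) fun i _ _ => hb i
    _ = S ^ q * (#(Iic m) : ℝ) ^ (1 - q) :=
        mul_div_rpow_sub_one (sum_nonneg fun i _ => hb i) hcard (by linarith)

end Antitone

theorem stmt3_general (N : ℕ) (a : Fin N → ℝ) (ha : ∀ i, 0 ≤ a i)
    (hmono : ∀ i j : Fin N, i ≤ j → a j ≤ a i)
    (r p : ℝ) (hr : 0 < r) (hrp : r ≤ p) (n : ℕ) :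
    ∑ k ∈ univ.filter (fun k : Fin N => n ≤ (k : ℕ)), a k ^ p ≤
      (∑ i, a i ^ r) ^ (p / r) * ((n : ℝ) + 1) ^ (1 - p / r) := by
  rcases lt_or_ge n N with hnN | hNn
  · set m : Fin N := ⟨n, hnN⟩
    have htail : univ.filter (fun k : Fin N => n ≤ (k : ℕ)) = Ici m := by
      ext k
      simp [m, Fin.le_def]
    have hcard : (#(Iic m) : ℝ) = n + 1 := by simp [m]
    have hpow : ∀ i, a i ^ p = (a i ^ r) ^ (p / r) := fun i => by
      rw [← rpow_mul (ha i), mul_div_cancel₀ _ hr.ne']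
    simpa only [htail, hcard, hpow] using
      sum_Ici_rpow_le_of_antitone (b := fun i => a i ^ r) (fun i => rpow_nonneg (ha i) r)
        (fun i j hij => rpow_le_rpow (ha j) (hmono i j hij) hr.le) m ((one_le_div hr).2 hrp)
  · have hempty : univ.filter (fun k : Fin N => n ≤ (k : ℕ)) = ∅ :=
      filter_false_of_mem fun k _ => by omega
    rw [hempty, sum_empty]
    exact mul_nonneg (rpow_nonneg (sum_nonneg fun i _ => rpow_nonneg (ha i) r) _)
      (rpow_nonneg (by positivity) _)

/-- Rearrangement lemma: if `a : Fin N → ℝ` is nonnegative and nonincreasing,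
then for `0 < r ≤ p` and `0 ≤ n ≤ N−1`,
`∑_{k ≥ n} a k ^ p ≤ (∑ i a i ^ r)^{p/r} (n+1)^{1 − p/r}`
(the sum on the left ranges over the positions `n+1,…,N` in 1-based indexing). -/
theorem stmt3 (N : ℕ) (a : Fin N → ℝ) (ha : ∀ i, 0 ≤ a i)
    (hmono : ∀ i j : Fin N, i ≤ j → a j ≤ a i)
    (r p : ℝ) (hr : 0 < r) (hrp : r ≤ p) (n : ℕ) (hn : n ≤ N - 1) :
    ∑ k ∈ univ.filter (fun k : Fin N => n ≤ (k : ℕ)), a k ^ p ≤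
      (∑ i, a i ^ r) ^ (p / r) * ((n : ℝ) + 1) ^ (1 - p / r) :=
  stmt3_general N a ha hmono r p hr hrp n
end

section
/- Let p ≥ 1, let C_j > 0, x₀ ≥ 0, and let Z be a nonnegative random variable such that for all v > 0, P(Z > A + C_j·(x₀ + v)^{p/2}) ≤ 2 e^{−(x₀+v)} for some constant A ≥ 0. Then ∫_0^∞ P(Z − A − C_j·2^{(p−2)₊/2} x₀^{p/2} > u) du ≤ C(p)·C_j·e^{−x₀}, where C(p) depends only on p. -/
/-!
Put `D = C_j 2^{(r-1)₊}` with `r = p/2`. Since `(a + b)^r ≤ 2^{(r-1)₊} (a^r + b^r)`, the event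
`Z > A + D x₀^r + u` is contained in `Z > A + C_j (x₀ + v)^r` for `v = (u/D)^{1/r}`, so its
probability is at most `2 e^{-x₀} e^{-(u/D)^{1/r}}`. Integrating in `u` gives `2 e^{-x₀} D Γ(r + 1)`.
-/

open Real MeasureTheory Set

lemma Real.rpow_add_le_two_rpow_mul_add_rpow {r a b : ℝ} (hr : 0 ≤ r) (ha : 0 ≤ a) (hb : 0 ≤ b) :
    (a + b) ^ r ≤ 2 ^ max (r - 1) 0 * (a ^ r + b ^ r) := by
  rcases le_total r 1 with h1 | h1
  · rw [max_eq_right (by linarith), rpow_zero, one_mul]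
    exact rpow_add_le_add_rpow ha hb hr h1
  · rw [max_eq_left (by linarith)]
    lift a to NNReal using ha
    lift b to NNReal using hb
    exact_mod_cast NNReal.rpow_add_le_mul_rpow_add_rpow a b h1

lemma integral_exp_neg_div_rpow {D q : ℝ} (hD : 0 < D) (hq : 0 < q) :
    ∫ u in Ioi (0 : ℝ), exp (-(u / D) ^ q) = D * Gamma (1 / q + 1) := by
  have h := integral_comp_mul_left_Ioi (fun x : ℝ => exp (-x ^ q)) 0 (inv_pos.mpr hD)
  simp only [mul_zero, integral_exp_neg_rpow hq, inv_inv, smul_eq_mul] at h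
  simpa only [div_eq_inv_mul] using h

lemma integrableOn_exp_neg_div_rpow {D q : ℝ} (hD : 0 < D) (hq : 0 < q) :
    IntegrableOn (fun u : ℝ => exp (-(u / D) ^ q)) (Ioi 0) := by
  -- the integral is positive, so it is not the junk value of a non-integrable function
  refine Integrable.of_integral_ne_zero ?_
  rw [integral_exp_neg_div_rpow hD hq]
  exact (mul_pos hD (Gamma_pos_of_pos (by positivity))).ne'

section Tail

variable {Ω : Type*} [MeasurableSpace Ω] (P : Measure Ω) (Z : Ω → ℝ) {A C x₀ r : ℝ}

lemma measure_lt_toReal_le_of_tail_le (hr : 0 < r) (hC : 0 < C) (hx₀ : 0 ≤ x₀)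
    (htail : ∀ v : ℝ, 0 < v →
      P {ω | A + C * (x₀ + v) ^ r < Z ω} ≤ ENNReal.ofReal (2 * exp (-(x₀ + v))))
    {u : ℝ} (hu : 0 < u) :
    (P {ω | A + C * 2 ^ max (r - 1) 0 * x₀ ^ r + u < Z ω}).toReal ≤
      2 * exp (-x₀) * exp (-(u / (C * 2 ^ max (r - 1) 0)) ^ r⁻¹) := by
  set D := C * 2 ^ max (r - 1) 0
  have hD : 0 < D := by positivity
  set v := (u / D) ^ r⁻¹
  have hv : 0 < v := by positivity
  have hDv : D * v ^ r = u := by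
    rw [rpow_inv_rpow (by positivity) hr.ne', mul_div_cancel₀ _ hD.ne']
  have hsplit : C * (x₀ + v) ^ r ≤ C * 2 ^ max (r - 1) 0 * x₀ ^ r + u := by
    calc C * (x₀ + v) ^ r ≤ C * (2 ^ max (r - 1) 0 * (x₀ ^ r + v ^ r)) :=
          mul_le_mul_of_nonneg_left (rpow_add_le_two_rpow_mul_add_rpow hr.le hx₀ hv.le) hC.le
      _ = C * 2 ^ max (r - 1) 0 * x₀ ^ r + D * v ^ r := by ring
      _ = C * 2 ^ max (r - 1) 0 * x₀ ^ r + u := by rw [hDv]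
  have hsub : {ω | A + C * 2 ^ max (r - 1) 0 * x₀ ^ r + u < Z ω} ⊆
      {ω | A + C * (x₀ + v) ^ r < Z ω} := fun ω hω => by
    simp only [mem_ofPred_eq] at hω ⊢
    linarith
  calc (P {ω | A + C * 2 ^ max (r - 1) 0 * x₀ ^ r + u < Z ω}).toReal
      ≤ 2 * exp (-(x₀ + v)) :=
        ENNReal.toReal_le_of_le_ofReal (by positivity) ((measure_mono hsub).trans (htail v hv))
    _ = 2 * exp (-x₀) * exp (-v) := by rw [neg_add, exp_add, mul_assoc]

theorem integral_measure_lt_le_of_tail_le (hr : 0 < r) (hC : 0 < C) (hx₀ : 0 ≤ x₀)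
    (htail : ∀ v : ℝ, 0 < v →
      P {ω | A + C * (x₀ + v) ^ r < Z ω} ≤ ENNReal.ofReal (2 * exp (-(x₀ + v)))) :
    ∫ u in Ioi (0 : ℝ), (P {ω | A + C * 2 ^ max (r - 1) 0 * x₀ ^ r + u < Z ω}).toReal ≤
      2 * 2 ^ max (r - 1) 0 * Gamma (r + 1) * C * exp (-x₀) := by
  set D := C * 2 ^ max (r - 1) 0
  have hD : 0 < D := by positivity
  have hq : 0 < r⁻¹ := inv_pos.mpr hr
  calc ∫ u in Ioi (0 : ℝ), (P {ω | A + D * x₀ ^ r + u < Z ω}).toReal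
      ≤ ∫ u in Ioi (0 : ℝ), 2 * exp (-x₀) * exp (-(u / D) ^ r⁻¹) :=
        setIntegral_mono_of_nonneg (fun _ _ => ENNReal.toReal_nonneg)
          (fun _ hu => measure_lt_toReal_le_of_tail_le P Z hr hC hx₀ htail hu)
          ((integrableOn_exp_neg_div_rpow hD hq).const_mul _)
    _ = 2 * exp (-x₀) * (D * Gamma (r + 1)) := by
        rw [integral_const_mul, integral_exp_neg_div_rpow hD hq, one_div, inv_inv]
    _ = 2 * 2 ^ max (r - 1) 0 * Gamma (r + 1) * C * exp (-x₀) := by ring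

end Tail

/-- For `p ≥ 1` there is a constant `C(p)` such that for any nonnegative random
variable `Z` satisfying, for all `v > 0`,
`P(Z > A + C_j (x₀+v)^{p/2}) ≤ 2 e^{−(x₀+v)}`, one has
`∫_0^∞ P(Z − A − C_j 2^{(p−2)₊/2} x₀^{p/2} > u) du ≤ C(p) C_j e^{−x₀}`. -/
theorem stmt11 (p : ℝ) (hp : 1 ≤ p) :
    ∃ Cp : ℝ, 0 < Cp ∧
      ∀ {Ω : Type} [MeasurableSpace Ω] (P : Measure Ω) [IsProbabilityMeasure P]
        (Z : Ω → ℝ) (A Cj x₀ : ℝ),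
        (∀ ω, 0 ≤ Z ω) → 0 ≤ A → 0 < Cj → 0 ≤ x₀ →
        (∀ v : ℝ, 0 < v →
          P {ω | A + Cj * (x₀ + v) ^ (p / 2) < Z ω} ≤
            ENNReal.ofReal (2 * Real.exp (-(x₀ + v)))) →
        ∫ u in Set.Ioi (0 : ℝ),
            (P {ω | A + Cj * 2 ^ (max (p - 2) 0 / 2) * x₀ ^ (p / 2) + u < Z ω}).toReal
          ≤ Cp * Cj * Real.exp (-x₀) := by
  have hr : 0 < p / 2 := by linarith
  have hexp : max (p - 2) 0 / 2 = max (p / 2 - 1) 0 := by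
    rw [← max_div_div_right zero_le_two]
    ring_nf
  refine ⟨2 * 2 ^ max (p / 2 - 1) 0 * Gamma (p / 2 + 1), by positivity, ?_⟩
  intro Ω _ P _ Z A Cj x₀ _ _ hCj hx₀ htail
  rw [hexp]
  exact integral_measure_lt_le_of_tail_le P Z hr hCj hx₀ htail
end
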